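/- Let M1, M2 be monoids over disjoint alphabets with combings R1, R2 satisfying R_i* = R_i, and let M = M1 ∗ M2 be the monoid free product with R = (R1 ∪ R2)*. For every word w ∈ R there exists a reduced word w' ∈ R such that w rewrites to w' under the rewriting system T = { (z, ε) : z ∈ R1 ∪ R2, z represents the identity of M1 or M2 }, and w = w' in M. -/

import Mathlib

open Computability

variable {A1 A2 : Type*}

/-- One-step rewriting relation of a rewriting system. -/
def RStep {A : Type*} (R : Set (List A × List A)) (x y : List A) : Prop :=
  ∃ p ∈ R, ∃ l r : List A, x = l ++ p.1 ++ r ∧ y = l ++ p.2 ++ r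

/-- Word equality in the presented monoid: the congruence generated by `R`. -/
def RCong {A : Type*} (R : Set (List A × List A)) : List A → List A → Prop :=
  Relation.EqvGen (RStep R)

/-- A language over `A1` viewed over the disjoint union alphabet `A1 ⊕ A2`. -/
def lang1 (L : Language A1) : Language (A1 ⊕ A2) :=
  {w | ∃ x ∈ L, w = x.map Sum.inl}

/-- A language over `A2` viewed over the disjoint union alphabet `A1 ⊕ A2`. -/
def lang2 (L : Language A2) : Language (A1 ⊕ A2) :=
  {w | ∃ x ∈ L, w = x.map Sum.inr}

/-- Relations over `A1` lifted to the disjoint union alphabet. -/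
def liftL (R : Set (List A1 × List A1)) :
    Set (List (A1 ⊕ A2) × List (A1 ⊕ A2)) :=
  {p | ∃ q ∈ R, p.1 = q.1.map Sum.inl ∧ p.2 = q.2.map Sum.inl}

/-- Relations over `A2` lifted to the disjoint union alphabet. -/
def liftR (R : Set (List A2 × List A2)) :
    Set (List (A1 ⊕ A2) × List (A1 ⊕ A2)) :=
  {p | ∃ q ∈ R, p.1 = q.1.map Sum.inr ∧ p.2 = q.2.map Sum.inr}

/-- The rewriting system `T = {(z, ε) : z ∈ R1 ∪ R2, z = 1 in M1 or M2}`. -/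
def idSys (rel1 : Set (List A1 × List A1)) (rel2 : Set (List A2 × List A2))
    (R1 : Language A1) (R2 : Language A2) :
    Set (List (A1 ⊕ A2) × List (A1 ⊕ A2)) :=
  {p | p.2 = [] ∧ ((∃ z ∈ R1, p.1 = z.map Sum.inl ∧ RCong rel1 z []) ∨
    (∃ z ∈ R2, p.1 = z.map Sum.inr ∧ RCong rel2 z []))}

/-- `w'` is a reduced alternating word: it has an alternating factorization into
nonempty pieces from `R1 ∪ R2`, each representing a nonidentity element of its
factor monoid. -/
def IsReducedAlt (rel1 : Set (List A1 × List A1)) (rel2 : Set (List A2 × List A2))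
    (R1 : Language A1) (R2 : Language A2) (w' : List (A1 ⊕ A2)) : Prop :=
  ∃ ps : List (List (A1 ⊕ A2)), ps.flatten = w' ∧
    (∀ p ∈ ps, p ≠ [] ∧
      ((∃ x ∈ R1, p = x.map Sum.inl ∧ ¬ RCong rel1 x []) ∨
       (∃ x ∈ R2, p = x.map Sum.inr ∧ ¬ RCong rel2 x []))) ∧
    ps.Chain' (fun p q => (p ∈ lang1 R1 ∧ q ∈ lang2 R2) ∨
      (p ∈ (lang2 R2 : Language (A1 ⊕ A2)) ∧ q ∈ lang1 R1))

/-!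
The word is reduced one piece at a time, from the right. A new piece that represents `1` is
deleted by `T`. Otherwise it is prepended to the reduced word already obtained, unless that word
starts with a piece of the same factor: then the two are merged into one piece (possible because
`R_i∗ = R_i`), which is deleted if it represents `1`. Either way the result alternates again, as
the piece following the merged one lies in the other factor. Every rule of `T` deletes a word
equal to `1` in `M`, so rewriting by `T` never leaves the congruence class.
-/

namespace RStep

variable {A : Type*} {T : Set (List A × List A)} {a b : List A}

theorem of_mem (h : (a, b) ∈ T) : RStep T a b :=
  ⟨(a, b), h, [], [], by simp, by simp⟩

theorem append_append (l r : List A) (h : RStep T a b) : RStep T (l ++ a ++ r) (l ++ b ++ r) := by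
  obtain ⟨p, hp, l', r', rfl, rfl⟩ := h
  exact ⟨p, hp, l ++ l', r' ++ r, by simp, by simp⟩

theorem reflTransGen_append_left (l : List A) (h : Relation.ReflTransGen (RStep T) a b) :
    Relation.ReflTransGen (RStep T) (l ++ a) (l ++ b) :=
  Relation.ReflTransGen.lift (l ++ ·) (fun _ _ hxy => by simpa using hxy.append_append l []) _ _ h

end RStep

namespace RCong

variable {A B : Type*} {T : Set (List A × List A)} {a b : List A}

theorem append_append (l r : List A) (h : RCong T a b) : RCong T (l ++ a ++ r) (l ++ b ++ r) := by
  induction h with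
  | rel x y h => exact .rel _ _ (h.append_append l r)
  | refl x => exact .refl _
  | symm x y _ ih => exact .symm _ _ ih
  | trans x y z _ _ ih₁ ih₂ => exact .trans _ _ _ ih₁ ih₂

theorem map (f : A → B) {S : Set (List B × List B)}
    (hf : ∀ p ∈ T, (p.1.map f, p.2.map f) ∈ S) (h : RCong T a b) :
    RCong S (a.map f) (b.map f) := by
  induction h with
  | rel x y h =>
    obtain ⟨p, hp, l, r, rfl, rfl⟩ := h
    exact .rel _ _ ⟨_, hf p hp, l.map f, r.map f, by simp, by simp⟩
  | refl x => exact .refl _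
  | symm x y _ ih => exact .symm _ _ ih
  | trans x y z _ _ ih₁ ih₂ => exact .trans _ _ _ ih₁ ih₂

theorem of_reflTransGen {S : Set (List A × List A)} (hT : ∀ p ∈ T, RCong S p.1 p.2)
    (h : Relation.ReflTransGen (RStep T) a b) : RCong S a b := by
  induction h with
  | refl => exact .refl _
  | tail _ hstep ih =>
    obtain ⟨p, hp, l, r, rfl, rfl⟩ := hstep
    exact .trans _ _ _ ih ((hT p hp).append_append l r)

end RCong

section Reduction

variable {A ι : Type*} (K : ι → Language A) (T : Set (List A × List A))

/-- Each piece is labelled by its factor, so alternation becomes a condition on labels, and a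
piece represents a nonidentity element exactly when `T` cannot delete it. -/
def IsReducedChain (qs : List (ι × List A)) : Prop :=
  (∀ q ∈ qs, q.2 ∈ K q.1 ∧ q.2 ≠ [] ∧ (q.2, []) ∉ T) ∧ qs.IsChain (·.1 ≠ ·.1)

variable {K T}

theorem IsReducedChain.nil : IsReducedChain K T [] :=
  ⟨by simp, List.isChain_nil⟩

theorem IsReducedChain.tail {q : ι × List A} {qs : List (ι × List A)}
    (h : IsReducedChain K T (q :: qs)) : IsReducedChain K T qs :=
  ⟨fun r hr => h.1 r (List.mem_cons_of_mem _ hr), h.2.tail⟩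

theorem IsReducedChain.cons {q : ι × List A} {qs : List (ι × List A)}
    (hq : q.2 ∈ K q.1 ∧ q.2 ≠ [] ∧ (q.2, []) ∉ T) (hqs : IsReducedChain K T qs)
    (hhead : ∀ r ∈ qs.head?, q.1 ≠ r.1) : IsReducedChain K T (q :: qs) := by
  refine ⟨by simpa [hq] using hqs.1, ?_⟩
  cases qs with
  | nil => exact List.isChain_singleton _
  | cons r rs => exact List.isChain_cons_cons.mpr ⟨hhead r rfl, hqs.2⟩

theorem IsReducedChain.exists_cons (hK : ∀ i, ∀ x ∈ K i, ∀ y ∈ K i, x ++ y ∈ K i)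
    {i : ι} {p : List A} (hp : p ∈ K i ∧ p ≠ [] ∧ (p, []) ∉ T)
    {qs : List (ι × List A)} (hqs : IsReducedChain K T qs) :
    ∃ qs', IsReducedChain K T qs' ∧
      Relation.ReflTransGen (RStep T) (p ++ (qs.map Prod.snd).flatten)
        (qs'.map Prod.snd).flatten := by
  cases qs with
  | nil => exact ⟨[(i, p)], hqs.cons hp (by simp), by simp [Relation.ReflTransGen.refl]⟩
  | cons q rest =>
    obtain ⟨j, q⟩ := q
    by_cases hij : i = j
    · subst hij
      have hmerged : p ++ q ∈ K i := hK i p hp.1 q (hqs.1 _ List.mem_cons_self).1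
      have hrest := hqs.tail
      by_cases hdel : (p ++ q, []) ∈ T
      · refine ⟨rest, hrest, .single ?_⟩
        simpa using (RStep.of_mem hdel).append_append [] (rest.map Prod.snd).flatten
      · refine ⟨(i, p ++ q) :: rest, hrest.cons ⟨hmerged, by simp [hp.2.1], hdel⟩ ?_,
          by simp [Relation.ReflTransGen.refl]⟩
        cases rest with
        | nil => simp
        | cons r rs => simpa using (List.isChain_cons_cons.mp hqs.2).1
    · exact ⟨(i, p) :: (j, q) :: rest, hqs.cons hp (by simpa using hij),
        by simp [Relation.ReflTransGen.refl]⟩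

theorem exists_isReducedChain (hK : ∀ i, ∀ x ∈ K i, ∀ y ∈ K i, x ++ y ∈ K i)
    (ps : List (List A)) (hps : ∀ p ∈ ps, ∃ i, p ∈ K i) :
    ∃ qs, IsReducedChain K T qs ∧
      Relation.ReflTransGen (RStep T) ps.flatten (qs.map Prod.snd).flatten := by
  induction ps with
  | nil => exact ⟨[], .nil, .refl⟩
  | cons p ps ih =>
    obtain ⟨qs, hqs, hrw⟩ := ih fun q hq => hps q (List.mem_cons_of_mem _ hq)
    obtain ⟨i, hpi⟩ := hps p List.mem_cons_self
    have hrw' := RStep.reflTransGen_append_left p hrw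
    rw [List.flatten_cons]
    by_cases hdel : p = [] ∨ (p, []) ∈ T
    · refine ⟨qs, hqs, hrw'.trans ?_⟩
      rcases hdel with rfl | hdel
      · exact .refl
      · simpa using Relation.ReflTransGen.single
          ((RStep.of_mem hdel).append_append [] (qs.map Prod.snd).flatten)
    · obtain ⟨qs', hqs', hrw''⟩ := hqs.exists_cons hK ⟨hpi, not_or.mp hdel⟩
      exact ⟨qs', hqs', hrw'.trans hrw''⟩

end Reduction

theorem Language.append_mem_of_kstar_eq {A : Type*} {L : Language A} (hL : L∗ = L) {x y : List A}
    (hx : x ∈ L) (hy : y ∈ L) : x ++ y ∈ L := by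
  rw [← hL]
  simpa using Language.join_mem_kstar (L := [x, y]) (by simp [hx, hy])

section FreeProduct

variable {rel1 : Set (List A1 × List A1)} {rel2 : Set (List A2 × List A2)}
  {R1 : Language A1} {R2 : Language A2}

theorem append_mem_lang1 (hs : R1∗ = R1) {x y : List (A1 ⊕ A2)} :
    x ∈ lang1 R1 → y ∈ lang1 R1 → x ++ y ∈ lang1 R1 := by
  rintro ⟨a, ha, rfl⟩ ⟨b, hb, rfl⟩
  exact ⟨a ++ b, Language.append_mem_of_kstar_eq hs ha hb, by simp⟩

theorem append_mem_lang2 (hs : R2∗ = R2) {x y : List (A1 ⊕ A2)} :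
    x ∈ lang2 R2 → y ∈ lang2 R2 → x ++ y ∈ lang2 R2 := by
  rintro ⟨a, ha, rfl⟩ ⟨b, hb, rfl⟩
  exact ⟨a ++ b, Language.append_mem_of_kstar_eq hs ha hb, by simp⟩

theorem IsReducedAlt.mem_kstar {w : List (A1 ⊕ A2)} (h : IsReducedAlt rel1 rel2 R1 R2 w) :
    w ∈ (lang1 R1 + lang2 R2 : Language (A1 ⊕ A2))∗ := by
  obtain ⟨ps, rfl, hps, -⟩ := h
  refine Language.join_mem_kstar fun p hp => ?_
  rcases (hps p hp).2 with ⟨x, hx, rfl, -⟩ | ⟨x, hx, rfl, -⟩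
  exacts [Or.inl ⟨x, hx, rfl⟩, Or.inr ⟨x, hx, rfl⟩]

theorem isReducedAlt_of_isReducedChain {qs : List (Fin 2 × List (A1 ⊕ A2))}
    (h : IsReducedChain ![lang1 R1, lang2 R2] (idSys rel1 rel2 R1 R2) qs) :
    IsReducedAlt rel1 rel2 R1 R2 (qs.map Prod.snd).flatten := by
  refine ⟨qs.map Prod.snd, rfl, ?_, ?_⟩
  · simp only [List.mem_map]
    rintro _ ⟨⟨i, p⟩, hq, rfl⟩
    obtain ⟨hK, hne, hT⟩ := h.1 _ hq
    refine ⟨hne, ?_⟩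
    fin_cases i
    · obtain ⟨x, hx, rfl⟩ := hK
      exact .inl ⟨x, hx, rfl, fun hx1 => hT ⟨rfl, .inl ⟨x, hx, rfl, hx1⟩⟩⟩
    · obtain ⟨x, hx, rfl⟩ := hK
      exact .inr ⟨x, hx, rfl, fun hx1 => hT ⟨rfl, .inr ⟨x, hx, rfl, hx1⟩⟩⟩
  · refine (List.isChain_map _).mpr (h.2.imp_of_mem_imp ?_)
    rintro ⟨i, p⟩ ⟨j, q⟩ hp hq hij
    have hpi := (h.1 _ hp).1
    have hqj := (h.1 _ hq).1
    fin_cases i <;> fin_cases j <;> simp_all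

theorem rCong_of_mem_idSys {p : List (A1 ⊕ A2) × List (A1 ⊕ A2)}
    (hp : p ∈ idSys rel1 rel2 R1 R2) : RCong (liftL rel1 ∪ liftR rel2) p.1 p.2 := by
  obtain ⟨p1, p2⟩ := p
  obtain ⟨rfl : p2 = [], ⟨z, -, rfl, hz⟩ | ⟨z, -, rfl, hz⟩⟩ := hp
  · exact hz.map Sum.inl fun q hq => .inl ⟨q, hq, rfl, rfl⟩
  · exact hz.map Sum.inr fun q hq => .inr ⟨q, hq, rfl, rfl⟩

end FreeProduct

theorem exists_reduced_rewrite_general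
    (rel1 : Set (List A1 × List A1)) (rel2 : Set (List A2 × List A2))
    (R1 : Language A1) (R2 : Language A2)
    (hs1 : R1∗ = R1) (hs2 : R2∗ = R2) :
    ∀ w ∈ ((lang1 R1 + lang2 R2 : Language (A1 ⊕ A2))∗ : Language (A1 ⊕ A2)),
      ∃ w' ∈ ((lang1 R1 + lang2 R2 : Language (A1 ⊕ A2))∗ : Language (A1 ⊕ A2)),
        IsReducedAlt rel1 rel2 R1 R2 w' ∧
        Relation.ReflTransGen (RStep (idSys rel1 rel2 R1 R2)) w w' ∧
        RCong (liftL rel1 ∪ liftR rel2) w w' := by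
  intro w hw
  obtain ⟨ps, rfl, hps⟩ := Language.mem_kstar.mp hw
  have hK : ∀ i, ∀ x ∈ ![lang1 R1, lang2 R2] i, ∀ y ∈ ![lang1 R1, lang2 R2] i,
      x ++ y ∈ (![lang1 R1, lang2 R2] i : Language (A1 ⊕ A2)) := by
    simp only [Fin.forall_fin_two]
    exact ⟨fun x hx y hy => append_mem_lang1 hs1 hx hy,
      fun x hx y hy => append_mem_lang2 hs2 hx hy⟩
  obtain ⟨qs, hqs, hrw⟩ := exists_isReducedChain (T := idSys rel1 rel2 R1 R2) hK ps
    fun p hp => ((Language.mem_add _ _ p).mp (hps p hp)).elim (⟨0, ·⟩) (⟨1, ·⟩)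
  have hred := isReducedAlt_of_isReducedChain hqs
  exact ⟨_, hred.mem_kstar, hred, hrw, .of_reflTransGen (fun _ => rCong_of_mem_idSys) hrw⟩

/-- Let `M1 = Mon⟨A1 | rel1⟩`, `M2 = Mon⟨A2 | rel2⟩` be monoids over disjoint
alphabets with regular combings `R1, R2` satisfying `R_i* = R_i`, and let
`M = M1 ∗ M2` be the monoid free product with combing `R = (R1 ∪ R2)*`. For every
`w ∈ R` there is a *reduced* `w' ∈ R` with `w →*_T w'` (where
`T = {(z, ε) : z ∈ R1 ∪ R2, z = 1 in its factor}`) and `w = w'` in `M`. -/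
theorem exists_reduced_rewrite [Fintype A1] [Fintype A2]
    (rel1 : Set (List A1 × List A1)) (rel2 : Set (List A2 × List A2))
    (R1 : Language A1) (R2 : Language A2)
    (hreg1 : R1.IsRegular) (hreg2 : R2.IsRegular)
    (hcomb1 : ∀ w : List A1, ∃ r ∈ R1, RCong rel1 r w)
    (hcomb2 : ∀ w : List A2, ∃ r ∈ R2, RCong rel2 r w)
    (hs1 : R1∗ = R1) (hs2 : R2∗ = R2) :
    ∀ w ∈ ((lang1 R1 + lang2 R2 : Language (A1 ⊕ A2))∗ : Language (A1 ⊕ A2)),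
      ∃ w' ∈ ((lang1 R1 + lang2 R2 : Language (A1 ⊕ A2))∗ : Language (A1 ⊕ A2)),
        IsReducedAlt rel1 rel2 R1 R2 w' ∧
        Relation.ReflTransGen (RStep (idSys rel1 rel2 R1 R2)) w w' ∧
        RCong (liftL rel1 ∪ liftR rel2) w w' :=
  exists_reduced_rewrite_general rel1 rel2 R1 R2 hs1 hs2
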